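/- arXiv:1312.3917 — 3 statements merged into one kernel-verified Lean document; each statement's English description precedes it below -/
import Mathlib

section
/- Work on a filtered probability space (Ω, ℱ, (ℱ_t)_{t∈[0,T]}, P) satisfying the usual conditions, with an adapted stock price process S = (S_t)_{t∈[0,T]}, S_t > 0 a.s., and transaction cost λ ∈ (0,1). Let S̃ = (S̃_t)_{t∈[0,T]} be any adapted process with (1−λ)S_t ≤ S̃_t ≤ (1+λ)S_t for all t ∈ [0,T], almost surely. Then for every simple self-financing strategy with initial capital x > 0 given by stopping times 0 = τ_0 ≤ τ_1 ≤ … ≤ τ_n = T and bounded ℱ_{τ_i}-measurable random variables h_i, the liquidation value satisfies, almost surely for every t ∈ [0,T], V_t ≤ x + Σ_{i=0}^{n−1} h_i (S̃_{τ_{i+1}∧t} − S̃_{τ_i∧t}); that is, the liquidation value under transaction costs is dominated pathwise by the frictionless wealth process obtained by trading the same positions at the price S̃. -/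
open MeasureTheory Set

/-- A simple self-financing strategy on `[0,T]`: stopping times
`0 = τ_0 ≤ τ_1 ≤ … ≤ τ_n = T` and bounded `ℱ_{τ_i}`-measurable random variables `h_i`
describing the stock position held on `(τ_i, τ_{i+1}]`. -/
structure SimpleStrategy {Ω : Type*} {m : MeasurableSpace Ω}
    (ℱ : Filtration ℝ m) (T : ℝ) where
  n : ℕ
  τ : ℕ → Ω → ℝ
  h : ℕ → Ω → ℝ
  stopping : ∀ i, IsStoppingTime ℱ (fun ω => ((τ i ω : ℝ) : WithTop ℝ))
  tau_zero : ∀ ω, τ 0 ω = 0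
  tau_last : ∀ ω, τ n ω = T
  tau_mono : ∀ ω, ∀ i, i < n → τ i ω ≤ τ (i + 1) ω
  h_meas : ∀ i, Measurable[(stopping i).measurableSpace] (h i)
  h_bdd : ∀ i, ∃ C : ℝ, ∀ ω, |h i ω| ≤ C

namespace SimpleStrategy

variable {Ω : Type*} {m : MeasurableSpace Ω} {ℱ : Filtration ℝ m} {T : ℝ}

/-- The stock position `φ¹_t = Σ_{i<n} h_i 1_{(τ_i, τ_{i+1}]}(t)`. -/
noncomputable def stockPos (σ : SimpleStrategy ℱ T) (t : ℝ) (ω : Ω) : ℝ :=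
  ∑ i ∈ Finset.range σ.n, if σ.τ i ω < t ∧ t ≤ σ.τ (i + 1) ω then σ.h i ω else 0

/-- The previous position `h_{i-1}`, with the convention `h_{-1} = 0`. -/
noncomputable def prevPos (σ : SimpleStrategy ℱ T) (i : ℕ) (ω : Ω) : ℝ :=
  if i = 0 then 0 else σ.h (i - 1) ω

/-- The cash position: purchases at the ask price `(1+λ)S`, sales at the bid price
`(1−λ)S`, i.e. `φ⁰_t = −Σ_{i : τ_i < t} [(h_i−h_{i−1})⁺(1+λ)S_{τ_i} − (h_i−h_{i−1})⁻(1−λ)S_{τ_i}]`. -/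
noncomputable def cashPos (σ : SimpleStrategy ℱ T) (lam : ℝ) (S : ℝ → Ω → ℝ)
    (t : ℝ) (ω : Ω) : ℝ :=
  - ∑ i ∈ Finset.range σ.n,
      if σ.τ i ω < t then
        max (σ.h i ω - σ.prevPos i ω) 0 * ((1 + lam) * S (σ.τ i ω) ω)
          - max (-(σ.h i ω - σ.prevPos i ω)) 0 * ((1 - lam) * S (σ.τ i ω) ω)
      else 0

/-- The liquidation value
`V_t = x + φ⁰_t + (φ¹_t)⁺ (1−λ) S_t − (φ¹_t)⁻ (1+λ) S_t`. -/
noncomputable def liqValue (σ : SimpleStrategy ℱ T) (lam x : ℝ) (S : ℝ → Ω → ℝ)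
    (t : ℝ) (ω : Ω) : ℝ :=
  x + σ.cashPos lam S t ω + max (σ.stockPos t ω) 0 * ((1 - lam) * S t ω)
    - max (-(σ.stockPos t ω)) 0 * ((1 + lam) * S t ω)

/-- The frictionless wealth increment obtained by trading the same positions at the
price `S̃`:  `Σ_{i<n} h_i (S̃_{τ_{i+1} ∧ t} − S̃_{τ_i ∧ t})`. -/
noncomputable def frictionlessGain (σ : SimpleStrategy ℱ T) (Stilde : ℝ → Ω → ℝ)
    (t : ℝ) (ω : Ω) : ℝ :=
  ∑ i ∈ Finset.range σ.n,
    σ.h i ω * (Stilde (min (σ.τ (i + 1) ω) t) ω - Stilde (min (σ.τ i ω) t) ω)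

end SimpleStrategy

/-! Pathwise, a trade of size `a` at a time where the frictionless price `S̃` lies in the
bid-ask spread costs at least `a S̃`, and liquidating a position `a` yields at most `a S̃`.
Summation by parts turns the frictionless gain into exactly these two kinds of terms: the trades
`h_i - h_{i-1}` made before `t`, valued at `S̃_{τ_i}`, and the position held at `t`, valued at `S̃_t`.
Comparing term by term gives the inequality for each path on which `S̃` stays in the spread. -/

section Spread

variable {R : Type*} [CommRing R] [LinearOrder R] [IsOrderedRing R]

theorem max_mul_sub_max_neg_mul_le_mul (a : R) {bid p ask : R} (hbid : bid ≤ p)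
    (hask : p ≤ ask) : max a 0 * bid - max (-a) 0 * ask ≤ a * p := by
  have hpos : 0 ≤ max a 0 * (p - bid) := mul_nonneg (le_max_right _ _) (sub_nonneg.2 hbid)
  have hneg : 0 ≤ max (-a) 0 * (ask - p) := mul_nonneg (le_max_right _ _) (sub_nonneg.2 hask)
  calc max a 0 * bid - max (-a) 0 * ask
      = max a 0 * p - max (-a) 0 * p - (max a 0 * (p - bid) + max (-a) 0 * (ask - p)) := by
        ring
    _ ≤ max a 0 * p - max (-a) 0 * p := sub_le_self _ (add_nonneg hpos hneg)
    _ = a * p := by rw [← sub_mul, max_zero_sub_max_neg_zero_eq_self]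

theorem mul_le_max_mul_sub_max_neg_mul (a : R) {bid p ask : R} (hbid : bid ≤ p)
    (hask : p ≤ ask) : a * p ≤ max a 0 * ask - max (-a) 0 * bid := by
  have := max_mul_sub_max_neg_mul_le_mul (-a) hbid hask
  rw [neg_neg, neg_mul] at this
  exact (le_neg.1 this).trans_eq (neg_sub _ _)

end Spread

namespace SimpleStrategy

variable {Ω : Type*} {m : MeasurableSpace Ω} {ℱ : Filtration ℝ m} {T : ℝ}
  (σ : SimpleStrategy ℱ T) (ω : Ω) {t : ℝ} {j : ℕ}

@[simp]
theorem prevPos_zero : σ.prevPos 0 ω = 0 := rfl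

@[simp]
theorem prevPos_succ (i : ℕ) : σ.prevPos (i + 1) ω = σ.h i ω := rfl

theorem sum_range_h_mul_sub_by_parts (p : ℕ → ℝ) (j : ℕ) :
    ∑ i ∈ Finset.range j, σ.h i ω * (p (i + 1) - p i)
      = σ.prevPos j ω * p j - ∑ i ∈ Finset.range j, (σ.h i ω - σ.prevPos i ω) * p i := by
  induction j with
  | zero => simp
  | succ j ih =>
    rw [Finset.sum_range_succ, Finset.sum_range_succ, ih, prevPos_succ]
    ring

theorem monotoneOn_tau : MonotoneOn (σ.τ · ω) (Iic σ.n) :=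
  monotoneOn_of_le_add_one ordConnected_Iic fun i _ _ hi => σ.tau_mono ω i hi

theorem tau_mem_Icc {i : ℕ} (hi : i ≤ σ.n) : σ.τ i ω ∈ Icc 0 T := by
  constructor
  · simpa [σ.tau_zero] using σ.monotoneOn_tau ω (Nat.zero_le σ.n) hi (Nat.zero_le i)
  · simpa [σ.tau_last] using σ.monotoneOn_tau ω hi (mem_Iic.2 le_rfl) hi

theorem exists_tau_lt_iff (ht : t ≤ T) :
    ∃ j ≤ σ.n, ∀ i ≤ σ.n, σ.τ i ω < t ↔ i < j := by
  classical
  have hex : ∃ j, t ≤ σ.τ j ω := ⟨σ.n, by rwa [σ.tau_last]⟩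
  refine ⟨Nat.find hex, Nat.find_min' hex (by rwa [σ.tau_last]), fun i hi => ⟨?_, ?_⟩⟩
  · intro hit
    by_contra! hji
    exact not_lt.2 ((Nat.find_spec hex).trans (σ.monotoneOn_tau ω (hji.trans hi) hi hji)) hit
  · exact fun hij => not_le.1 (Nat.find_min hex hij)

theorem cashPos_eq_neg_sum_range (hjn : j ≤ σ.n) (hj : ∀ i ≤ σ.n, σ.τ i ω < t ↔ i < j) (lam : ℝ)
    (S : ℝ → Ω → ℝ) :
    σ.cashPos lam S t ω = -∑ i ∈ Finset.range j,
      (max (σ.h i ω - σ.prevPos i ω) 0 * ((1 + lam) * S (σ.τ i ω) ω)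
        - max (-(σ.h i ω - σ.prevPos i ω)) 0 * ((1 - lam) * S (σ.τ i ω) ω)) := by
  rw [cashPos, ← Finset.sum_subset (Finset.range_subset_range.2 hjn)]
  · refine congrArg _ (Finset.sum_congr rfl fun i hi => if_pos ?_)
    have hij := Finset.mem_range.1 hi
    exact (hj i (hij.le.trans hjn)).2 hij
  · intro i hi hij
    have hin := (Finset.mem_range.1 hi).le
    exact if_neg fun hit => hij (Finset.mem_range.2 ((hj i hin).1 hit))

theorem stockPos_eq_prevPos (hjn : j ≤ σ.n) (hj : ∀ i ≤ σ.n, σ.τ i ω < t ↔ i < j) :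
    σ.stockPos t ω = σ.prevPos j ω := by
  have hiff : ∀ i ∈ Finset.range σ.n, σ.τ i ω < t ∧ t ≤ σ.τ (i + 1) ω ↔ i + 1 = j := by
    intro i hi
    have hin := Finset.mem_range.1 hi
    rw [← not_lt, hj i hin.le, hj (i + 1) hin]
    omega
  rw [stockPos, Finset.sum_congr rfl fun i hi => if_congr (hiff i hi) rfl rfl]
  rcases j with _ | k
  · simp
  · simp [Finset.sum_ite_eq', show k < σ.n by omega]

theorem frictionlessGain_eq (hjn : j ≤ σ.n) (hj : ∀ i ≤ σ.n, σ.τ i ω < t ↔ i < j)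
    (Stilde : ℝ → Ω → ℝ) :
    σ.frictionlessGain Stilde t ω = σ.prevPos j ω * Stilde t ω
      - ∑ i ∈ Finset.range j, (σ.h i ω - σ.prevPos i ω) * Stilde (σ.τ i ω) ω := by
  set p : ℕ → ℝ := fun i => Stilde (min (σ.τ i ω) t) ω
  have hp_lt : ∀ i < j, p i = Stilde (σ.τ i ω) ω := fun i hij =>
    congrArg (Stilde · ω) (min_eq_left ((hj i (hij.le.trans hjn)).2 hij).le)
  have hp_ge : ∀ i, j ≤ i → i ≤ σ.n → p i = Stilde t ω := fun i hji hin =>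
    congrArg (Stilde · ω) (min_eq_right (not_lt.1 (mt (hj i hin).1 (not_lt.2 hji))))
  calc σ.frictionlessGain Stilde t ω
      = ∑ i ∈ Finset.range σ.n, σ.h i ω * (p (i + 1) - p i) := rfl
    _ = ∑ i ∈ Finset.range j, σ.h i ω * (p (i + 1) - p i) := by
      refine (Finset.sum_subset (Finset.range_subset_range.2 hjn) fun i hi hij => ?_).symm
      have hin := Finset.mem_range.1 hi
      have hji := not_lt.1 (mt Finset.mem_range.2 hij)
      rw [hp_ge i hji hin.le, hp_ge (i + 1) (hji.trans i.le_succ) hin, sub_self, mul_zero]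
    _ = σ.prevPos j ω * p j - ∑ i ∈ Finset.range j, (σ.h i ω - σ.prevPos i ω) * p i :=
      σ.sum_range_h_mul_sub_by_parts ω p j
    _ = _ := by
      rw [hp_ge j le_rfl hjn, Finset.sum_congr rfl fun i hi => by rw [hp_lt i (Finset.mem_range.1 hi)]]

theorem liqValue_le_add_frictionlessGain {lam x : ℝ} {S Stilde : ℝ → Ω → ℝ}
    (hspread : ∀ t ∈ Icc 0 T,
      (1 - lam) * S t ω ≤ Stilde t ω ∧ Stilde t ω ≤ (1 + lam) * S t ω)
    (ht : t ∈ Icc 0 T) :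
    σ.liqValue lam x S t ω ≤ x + σ.frictionlessGain Stilde t ω := by
  obtain ⟨j, hjn, hj⟩ := σ.exists_tau_lt_iff ω ht.2
  have hliq := max_mul_sub_max_neg_mul_le_mul (σ.prevPos j ω) (hspread t ht).1 (hspread t ht).2
  have htrades := Finset.sum_le_sum (s := Finset.range j) fun i hi =>
    have hτ := hspread _ (σ.tau_mem_Icc ω ((Finset.mem_range.1 hi).le.trans hjn))
    mul_le_max_mul_sub_max_neg_mul (σ.h i ω - σ.prevPos i ω) hτ.1 hτ.2
  rw [liqValue, σ.cashPos_eq_neg_sum_range ω hjn hj, σ.stockPos_eq_prevPos ω hjn hj,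
    σ.frictionlessGain_eq ω hjn hj Stilde]
  linarith

end SimpleStrategy

theorem liqValue_le_frictionless_wealth_general
    {Ω : Type*} {m : MeasurableSpace Ω} (P : Measure Ω)
    (ℱ : Filtration ℝ m) (T : ℝ) (S : ℝ → Ω → ℝ) (lam : ℝ) (Stilde : ℝ → Ω → ℝ)
    (hspread : ∀ᵐ ω ∂P, ∀ t ∈ Set.Icc (0 : ℝ) T,
      (1 - lam) * S t ω ≤ Stilde t ω ∧ Stilde t ω ≤ (1 + lam) * S t ω)
    (x : ℝ) (σ : SimpleStrategy ℱ T) :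
    ∀ᵐ ω ∂P, ∀ t ∈ Set.Icc (0 : ℝ) T,
      σ.liqValue lam x S t ω ≤ x + σ.frictionlessGain Stilde t ω := by
  filter_upwards [hspread] with ω hω t ht
  exact σ.liqValue_le_add_frictionlessGain ω hω ht

/-- On a filtered probability space with an adapted stock price `S > 0` a.s.
and transaction cost `λ ∈ (0,1)`, let `S̃` be any adapted process evolving in the bid-ask
spread, `(1−λ)S_t ≤ S̃_t ≤ (1+λ)S_t` for all `t ∈ [0,T]` a.s. Then for every simple
self-financing strategy with initial capital `x > 0`, almost surely for every `t ∈ [0,T]`,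
the liquidation value under transaction costs is dominated by the frictionless wealth
obtained by trading the same positions at the price `S̃`:
`V_t ≤ x + Σ_{i<n} h_i (S̃_{τ_{i+1}∧t} − S̃_{τ_i∧t})`. -/
theorem liqValue_le_frictionless_wealth
    {Ω : Type*} {m : MeasurableSpace Ω} (P : Measure Ω) [IsProbabilityMeasure P]
    (ℱ : Filtration ℝ m) (T : ℝ) (hT : 0 < T)
    (S : ℝ → Ω → ℝ) (hSadp : Adapted ℱ S)
    (hSpos : ∀ t ∈ Set.Icc (0 : ℝ) T, ∀ᵐ ω ∂P, 0 < S t ω)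
    (lam : ℝ) (hlam : lam ∈ Set.Ioo (0 : ℝ) 1)
    (Stilde : ℝ → Ω → ℝ) (hStadp : Adapted ℱ Stilde)
    (hspread : ∀ᵐ ω ∂P, ∀ t ∈ Set.Icc (0 : ℝ) T,
      (1 - lam) * S t ω ≤ Stilde t ω ∧ Stilde t ω ≤ (1 + lam) * S t ω)
    (x : ℝ) (hx : 0 < x) (σ : SimpleStrategy ℱ T) :
    ∀ᵐ ω ∂P, ∀ t ∈ Set.Icc (0 : ℝ) T,
      σ.liqValue lam x S t ω ≤ x + σ.frictionlessGain Stilde t ω :=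
  liqValue_le_frictionless_wealth_general P ℱ T S lam Stilde hspread x σ
end

section
/- Let (Ω, ℱ, P) be a probability space and let U : (0,∞) → ℝ be continuously differentiable, strictly increasing and strictly concave, with U'(0+) = +∞, U'(∞) = 0 and limsup_{x→∞} x U'(x)/U(x) < 1; extend U to 0 by U(0) = lim_{x↓0} U(x) ∈ [−∞, ∞). Let D be a convex set of nonnegative random variables such that E[U(W)] is well-defined in [−∞, +∞] for every W ∈ D, and suppose there exist α > 0 and W₀ ∈ D with W₀ ≥ α almost surely. If V* ∈ D satisfies E[U(V*)] = sup_{W∈D} E[U(W)] < ∞, then V* > 0 almost surely. -/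
open MeasureTheory Set Filter Topology ENNReal

/-- The positive part of an extended real number, as an element of `ℝ≥0∞`. -/
noncomputable def erealPosPart (x : EReal) : ℝ≥0∞ :=
  if x = ⊤ then ⊤ else ENNReal.ofReal x.toReal

/-- The utility function `U : (0,∞) → ℝ` extended to `0` by the (possibly infinite)
value `U₀ ∈ [−∞, ∞)`. -/
noncomputable def utilAt (U : ℝ → ℝ) (U₀ : EReal) (x : ℝ) : EReal :=
  if x = 0 then U₀ else (U x : EReal)

/-- The expected utility `E[U(W)] ∈ [−∞, +∞]` of a nonnegative random variable `W`,
defined as the difference of the integrals of the positive and negative parts. -/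
noncomputable def expUtil {Ω : Type*} [MeasurableSpace Ω] (P : Measure Ω)
    (U : ℝ → ℝ) (U₀ : EReal) (W : Ω → ℝ) : EReal :=
  ((∫⁻ ω, erealPosPart (utilAt U U₀ (W ω)) ∂P : ℝ≥0∞) : EReal)
    - ((∫⁻ ω, erealPosPart (-(utilAt U U₀ (W ω))) ∂P : ℝ≥0∞) : EReal)

/-- `E[U(W)]` is well-defined in `[−∞, +∞]`: the positive part or the negative part of
`U(W)` has finite integral. -/
def ExpUtilWellDef {Ω : Type*} [MeasurableSpace Ω] (P : Measure Ω)
    (U : ℝ → ℝ) (U₀ : EReal) (W : Ω → ℝ) : Prop :=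
  (∫⁻ ω, erealPosPart (utilAt U U₀ (W ω)) ∂P) ≠ ⊤
    ∨ (∫⁻ ω, erealPosPart (-(utilAt U U₀ (W ω))) ∂P) ≠ ⊤

/-! If `V*` vanished on a set `A` of probability `δ > 0`, then mixing in a little of `W₀`,
`W_ε = (1 - ε) V* + ε W₀ ∈ D`, would strictly improve it. On `A` the utility rises from `U(0)`
to at least `U(ε α)`, a gain `δ (U(ε α) - U(0))` that grows faster than any multiple of `ε`
because `U'(0+) = ∞` (concavity gives `U(x) - U(0) ≥ U'(x) x`); off `A`, concavity and
monotonicity bound the loss by `ε (E[U(V*)] - U(α))`. The comparison takes place among real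
integrals: `E[U(V*)] ≥ E[U(W₀)] ≥ U(α)` forces `U(0) > -∞` and `E[U(V*)]` finite. -/

lemma erealPosPart_coe (r : ℝ) : erealPosPart (r : EReal) = ENNReal.ofReal r := by
  simp [erealPosPart]

lemma erealPosPart_neg_coe (r : ℝ) : erealPosPart (-(r : EReal)) = ENNReal.ofReal (-r) := by
  rw [← EReal.coe_neg, erealPosPart_coe]

lemma erealPosPart_mono {x y : EReal} (h : x ≤ y) : erealPosPart x ≤ erealPosPart y := by
  rcases eq_or_ne y ⊤ with rfl | hy
  · simp [erealPosPart]
  have hx : x ≠ ⊤ := ne_top_of_le_ne_top hy h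
  rcases eq_or_ne x ⊥ with rfl | hx'
  · simp [erealPosPart]
  · simpa only [erealPosPart, hx, hy, if_false] using
      ENNReal.ofReal_le_ofReal (EReal.toReal_le_toReal h hx' hy)

lemma coe_ennreal_sub_coe_ennreal_ne_bot {a b : ℝ≥0∞} (hb : b ≠ ⊤) :
    (a : EReal) - (b : EReal) ≠ ⊥ := by
  rw [← EReal.coe_ennreal_toReal hb, sub_eq_add_neg, ← EReal.coe_neg]
  exact EReal.add_ne_bot_iff.2 ⟨EReal.coe_ennreal_ne_bot a, EReal.coe_ne_bot _⟩

lemma Real.enorm_eq_ofReal_add_ofReal_neg (r : ℝ) :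
    ‖r‖ₑ = ENNReal.ofReal r + ENNReal.ofReal (-r) := by
  rcases le_total 0 r with h | h
  · rw [Real.enorm_eq_ofReal h, ENNReal.ofReal_of_nonpos (neg_nonpos.2 h), add_zero]
  · rw [Real.enorm_eq_ofReal_abs, abs_of_nonpos h, ENNReal.ofReal_of_nonpos h, zero_add]

section erealIntegral

variable {Ω : Type*} [MeasurableSpace Ω] {P : Measure Ω} {f g : Ω → ℝ}

noncomputable def erealIntegral (P : Measure Ω) (f : Ω → ℝ) : EReal :=
  ((∫⁻ ω, ENNReal.ofReal (f ω) ∂P : ℝ≥0∞) : EReal)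
    - ((∫⁻ ω, ENNReal.ofReal (-f ω) ∂P : ℝ≥0∞) : EReal)

lemma erealIntegral_eq_integral (hf : Integrable f P) :
    erealIntegral P f = ((∫ ω, f ω ∂P : ℝ) : EReal) := by
  rw [integral_eq_lintegral_pos_part_sub_lintegral_neg_part hf, EReal.coe_sub,
    EReal.coe_ennreal_toReal hf.lintegral_lt_top.ne,
    EReal.coe_ennreal_toReal (x := ∫⁻ ω, ENNReal.ofReal (-f ω) ∂P) hf.neg.lintegral_lt_top.ne,
    erealIntegral]

lemma integral_le_erealIntegral (hg : Integrable g P) (hgf : g ≤ᵐ[P] f) :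
    ((∫ ω, g ω ∂P : ℝ) : EReal) ≤ erealIntegral P f := by
  rw [← erealIntegral_eq_integral hg]
  refine EReal.sub_le_sub (EReal.coe_ennreal_le_coe_ennreal_iff.2 ?_)
    (EReal.coe_ennreal_le_coe_ennreal_iff.2 ?_)
  · exact lintegral_mono_ae (hgf.mono fun ω h => ENNReal.ofReal_le_ofReal h)
  · exact lintegral_mono_ae (hgf.mono fun ω h => ENNReal.ofReal_le_ofReal (neg_le_neg h))

lemma integrable_of_erealIntegral_ne_top_of_ne_bot (hf : AEStronglyMeasurable f P)
    (htop : erealIntegral P f ≠ ⊤) (hbot : erealIntegral P f ≠ ⊥) : Integrable f P := by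
  have hneg : ∫⁻ ω, ENNReal.ofReal (-f ω) ∂P ≠ ⊤ := by
    intro h
    rw [erealIntegral, h, EReal.coe_ennreal_top, EReal.sub_top] at hbot
    exact hbot rfl
  have hpos : ∫⁻ ω, ENNReal.ofReal (f ω) ∂P ≠ ⊤ := by
    intro h
    rw [erealIntegral, h, EReal.coe_ennreal_top, ← EReal.coe_ennreal_toReal hneg,
      EReal.top_sub_coe] at htop
    exact htop rfl
  refine ⟨hf, ?_⟩
  rw [hasFiniteIntegral_def]
  simp_rw [Real.enorm_eq_ofReal_add_ofReal_neg]
  rw [lintegral_add_left' hf.aemeasurable.ennreal_ofReal]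
  exact ENNReal.add_lt_top.2 ⟨hpos.lt_top, hneg.lt_top⟩

end erealIntegral

section expUtil

variable {Ω : Type*} [MeasurableSpace Ω] {P : Measure Ω} {U : ℝ → ℝ} {W : Ω → ℝ}

lemma expUtil_ne_bot_of_ae_le_utilAt [IsFiniteMeasure P] {U₀ : EReal} (r : ℝ)
    (h : ∀ᵐ ω ∂P, (r : EReal) ≤ utilAt U U₀ (W ω)) : expUtil P U U₀ W ≠ ⊥ := by
  refine coe_ennreal_sub_coe_ennreal_ne_bot
    (ne_top_of_le_ne_top (b := ∫⁻ _, ENNReal.ofReal (-r) ∂P) ?_ (lintegral_mono_ae ?_))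
  · exact (lintegral_const (ENNReal.ofReal (-r))).trans_ne
      (ENNReal.mul_ne_top ENNReal.ofReal_ne_top (measure_ne_top P univ))
  · filter_upwards [h] with ω hω
    rw [← erealPosPart_neg_coe]
    exact erealPosPart_mono (EReal.neg_le_neg_iff.2 hω)

lemma expUtil_bot_eq_bot (hW : Measurable W) (h : P {ω | W ω = 0} ≠ 0) :
    expUtil P U ⊥ W = ⊥ := by
  have hA : MeasurableSet {ω | W ω = 0} := hW (measurableSet_singleton 0)
  have hneg : ∫⁻ ω, erealPosPart (-utilAt U ⊥ (W ω)) ∂P = ⊤ := by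
    refine top_le_iff.1 (le_of_eq_of_le ?_ (lintegral_mono (f := {ω | W ω = 0}.indicator
      fun _ => ⊤) fun ω => ?_))
    · rw [lintegral_indicator_const hA, ENNReal.top_mul h]
    · by_cases hω : W ω = 0
      · simp [hω, utilAt, erealPosPart]
      · simp [hω]
  rw [expUtil, hneg, EReal.coe_ennreal_top, EReal.sub_top]

lemma coe_le_utilAt_of_le {U₀ : EReal} (hmono : MonotoneOn U (Ioi 0)) {α x : ℝ}
    (hα : 0 < α) (hαx : α ≤ x) : (U α : EReal) ≤ utilAt U U₀ x := by
  rw [utilAt, if_neg (hα.trans_le hαx).ne']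
  exact EReal.coe_le_coe_iff.2 (hmono hα (hα.trans_le hαx) hαx)

-- Constant on all of `(-∞, 0]`, not just at `0`, so that it is measurable whatever `U` does there.
noncomputable def realUtilAt (U : ℝ → ℝ) (u₀ : ℝ) : ℝ → ℝ :=
  (Ioi 0).piecewise U fun _ => u₀

lemma realUtilAt_of_pos {u₀ x : ℝ} (hx : 0 < x) : realUtilAt U u₀ x = U x :=
  piecewise_eq_of_mem _ _ _ hx

lemma realUtilAt_zero (u₀ : ℝ) : realUtilAt U u₀ 0 = u₀ :=
  piecewise_eq_of_notMem _ _ _ (lt_irrefl (0 : ℝ))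

lemma measurable_realUtilAt (hU : ContinuousOn U (Ioi 0)) (u₀ : ℝ) :
    Measurable (realUtilAt U u₀) :=
  hU.measurable_piecewise continuousOn_const measurableSet_Ioi

lemma utilAt_coe_of_nonneg {u₀ x : ℝ} (hx : 0 ≤ x) :
    utilAt U u₀ x = (realUtilAt U u₀ x : EReal) := by
  rcases hx.eq_or_lt with rfl | hx
  · rw [realUtilAt_zero, utilAt, if_pos rfl]
  · rw [realUtilAt_of_pos hx, utilAt, if_neg hx.ne']

lemma expUtil_coe_eq_erealIntegral {u₀ : ℝ} (hW : ∀ ω, 0 ≤ W ω) :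
    expUtil P U u₀ W = erealIntegral P (fun ω => realUtilAt U u₀ (W ω)) := by
  simp only [expUtil, erealIntegral, utilAt_coe_of_nonneg (hW _), erealPosPart_coe,
    erealPosPart_neg_coe]

end expUtil

section utility

variable {U U' : ℝ → ℝ} {u₀ : ℝ}

lemma ConcaveOn.mul_le_sub_of_hasDerivAt (hconc : ConcaveOn ℝ (Ioi 0) U) {x d : ℝ}
    (hx : 0 < x) (hd : HasDerivAt U d x) (hU₀ : Tendsto U (𝓝[>] 0) (𝓝 u₀)) :
    d * x ≤ U x - u₀ := by
  have hlim : Tendsto (fun η => d * (x - η)) (𝓝[>] 0) (𝓝 (d * x)) := by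
    have h : Continuous fun η => d * (x - η) := by fun_prop
    simpa using (h.tendsto 0).mono_left nhdsWithin_le_nhds
  refine le_of_tendsto_of_tendsto hlim (tendsto_const_nhds.sub hU₀) ?_
  filter_upwards [Ioo_mem_nhdsGT hx] with η ⟨hη0, hηx⟩
  have hslope := hconc.le_slope_of_hasDerivAt hη0 hx hηx hd
  rwa [slope_def_field, le_div_iff₀ (sub_pos.2 hηx)] at hslope

lemma eventually_mul_le_sub_of_tendsto_deriv_atTop (hconc : ConcaveOn ℝ (Ioi 0) U)
    (hderiv : ∀ x ∈ Ioi (0 : ℝ), HasDerivAt U (U' x) x)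
    (hInada₀ : Tendsto U' (𝓝[>] 0) atTop) (hU₀ : Tendsto U (𝓝[>] 0) (𝓝 u₀)) (M : ℝ) :
    ∀ᶠ x in 𝓝[>] 0, M * x ≤ U x - u₀ := by
  filter_upwards [hInada₀.eventually_ge_atTop M, self_mem_nhdsWithin] with x hM hx
  exact (mul_le_mul_of_nonneg_right hM (le_of_lt hx)).trans
    (hconc.mul_le_sub_of_hasDerivAt hx (hderiv x hx) hU₀)

lemma le_utility_mix (hmono : MonotoneOn U (Ioi 0)) (hconc : ConcaveOn ℝ (Ioi 0) U)
    {x w α ε : ℝ} (hx : 0 < x) (hα : 0 < α) (hαw : α ≤ w) (hε0 : 0 ≤ ε) (hε1 : ε ≤ 1) :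
    (1 - ε) * U x + ε * U α ≤ U ((1 - ε) * x + ε * w) := by
  have hmid : (1 - ε) * x + ε * α ∈ Ioi 0 :=
    hconc.1 hx hα (sub_nonneg.2 hε1) hε0 (by ring)
  have hle : (1 - ε) * x + ε * α ≤ (1 - ε) * x + ε * w := by gcongr
  calc (1 - ε) * U x + ε * U α ≤ U ((1 - ε) * x + ε * α) :=
        hconc.2 hx hα (sub_nonneg.2 hε1) hε0 (by ring)
    _ ≤ U ((1 - ε) * x + ε * w) := hmono hmid (lt_of_lt_of_le hmid hle) hle

end utility

section mix

variable {Ω : Type*} [MeasurableSpace Ω] {P : Measure Ω} [IsProbabilityMeasure P]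
  {U U' : ℝ → ℝ} {u₀ : ℝ} {V W₀ : Ω → ℝ} {α : ℝ}

lemma integral_le_expUtil_mix (hmono : MonotoneOn U (Ioi 0)) (hconc : ConcaveOn ℝ (Ioi 0) U)
    (hV : Measurable V) (hV0 : ∀ ω, 0 ≤ V ω) (hW₀0 : ∀ ω, 0 ≤ W₀ ω) (hα : 0 < α)
    (hW₀ : ∀ᵐ ω ∂P, α ≤ W₀ ω) (hf : Integrable (fun ω => realUtilAt U u₀ (V ω)) P)
    {ε : ℝ} (hε0 : 0 < ε) (hε1 : ε ≤ 1) :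
    (((1 - ε) * ∫ ω, realUtilAt U u₀ (V ω) ∂P + ε * U α
        + P.real {ω | V ω = 0} * (U (ε * α) - (1 - ε) * u₀ - ε * U α) : ℝ) : EReal)
      ≤ expUtil P U u₀ ((1 - ε) • V + ε • W₀) := by
  set A := {ω | V ω = 0}
  set c := U (ε * α) - (1 - ε) * u₀ - ε * U α
  set ψ : Ω → ℝ := fun ω =>
    (1 - ε) * realUtilAt U u₀ (V ω) + ε * U α + A.indicator (fun _ => c) ω
  have hA : MeasurableSet A := hV (measurableSet_singleton 0)
  have hf_affine : Integrable (fun ω => (1 - ε) * realUtilAt U u₀ (V ω) + ε * U α) P :=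
    (hf.const_mul _).add (integrable_const _)
  have hψ : Integrable ψ P := hf_affine.add ((integrable_const c).indicator hA)
  have hψle : ∀ᵐ ω ∂P, ψ ω ≤ realUtilAt U u₀ (((1 - ε) • V + ε • W₀) ω) := by
    filter_upwards [hW₀] with ω hω
    simp only [ψ, c, Pi.add_apply, Pi.smul_apply, smul_eq_mul]
    have hmix_pos : 0 < (1 - ε) * V ω + ε * W₀ ω := by
      nlinarith [mul_pos hε0 (hα.trans_le hω), mul_nonneg (sub_nonneg.2 hε1) (hV0 ω)]
    rw [realUtilAt_of_pos hmix_pos]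
    rcases (hV0 ω).eq_or_lt with h0 | hpos
    · have hεα : 0 < ε * α := mul_pos hε0 hα
      have hle : ε * α ≤ ε * W₀ ω := mul_le_mul_of_nonneg_left hω hε0.le
      rw [indicator_of_mem (show ω ∈ A from h0.symm), ← h0, realUtilAt_zero, mul_zero, zero_add]
      linarith [hmono hεα (hεα.trans_le hle) hle]
    · rw [indicator_of_notMem (show ω ∉ A from hpos.ne'), realUtilAt_of_pos hpos]
      linarith [le_utility_mix hmono hconc hpos hα hω hε0.le hε1]
  have hψint :
      ∫ ω, ψ ω ∂P = (1 - ε) * ∫ ω, realUtilAt U u₀ (V ω) ∂P + ε * U α + P.real A * c := by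
    simp only [ψ]
    rw [integral_add hf_affine ((integrable_const c).indicator hA),
      integral_add (hf.const_mul _) (integrable_const _), integral_const_mul, integral_const,
      integral_indicator_const c hA]
    simp [mul_comm]
  rw [expUtil_coe_eq_erealIntegral (W := (1 - ε) • V + ε • W₀) fun ω =>
    add_nonneg (mul_nonneg (sub_nonneg.2 hε1) (hV0 ω)) (mul_nonneg hε0.le (hW₀0 ω)), ← hψint]
  exact integral_le_erealIntegral hψ hψle

lemma exists_expUtil_lt_expUtil_mix (hderiv : ∀ x ∈ Ioi (0 : ℝ), HasDerivAt U (U' x) x)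
    (hmono : MonotoneOn U (Ioi 0)) (hconc : ConcaveOn ℝ (Ioi 0) U)
    (hInada₀ : Tendsto U' (𝓝[>] 0) atTop) (hU₀ : Tendsto U (𝓝[>] 0) (𝓝 u₀))
    (hV : Measurable V) (hV0 : ∀ ω, 0 ≤ V ω) (hW₀0 : ∀ ω, 0 ≤ W₀ ω) (hα : 0 < α)
    (hW₀ : ∀ᵐ ω ∂P, α ≤ W₀ ω) (hA : P {ω | V ω = 0} ≠ 0)
    (htop : expUtil P U u₀ V ≠ ⊤) (hbot : expUtil P U u₀ V ≠ ⊥) :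
    ∃ ε ∈ Ioo (0 : ℝ) 1, expUtil P U u₀ V < expUtil P U u₀ ((1 - ε) • V + ε • W₀) := by
  have hU : ContinuousOn U (Ioi 0) := fun x hx => (hderiv x hx).continuousAt.continuousWithinAt
  have hE := expUtil_coe_eq_erealIntegral (P := P) (U := U) (u₀ := u₀) hV0
  have hf : Integrable (fun ω => realUtilAt U u₀ (V ω)) P :=
    integrable_of_erealIntegral_ne_top_of_ne_bot
      ((measurable_realUtilAt hU u₀).comp hV).aestronglyMeasurable (hE ▸ htop) (hE ▸ hbot)
  set E := ∫ ω, realUtilAt U u₀ (V ω) ∂P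
  set δ := P.real {ω | V ω = 0}
  have hδ : 0 < δ := ENNReal.toReal_pos hA (measure_ne_top _ _)
  set C := E - U α + δ * (U α - u₀)
  obtain ⟨b, hb, hb0, hbα⟩ := ((eventually_mul_le_sub_of_tendsto_deriv_atTop hconc hderiv
    hInada₀ hU₀ ((C + 1) / (δ * α))).and (Ioo_mem_nhdsGT hα)).exists
  set ε := b / α
  have hε0 : 0 < ε := div_pos hb0 hα
  have hεα : ε * α = b := div_mul_cancel₀ b hα.ne'
  have hgain : ε * (C + 1) ≤ δ * (U b - u₀) := by
    calc ε * (C + 1) = δ * ((C + 1) / (δ * α) * b) := by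
          simp only [ε]; field_simp
      _ ≤ δ * (U b - u₀) := mul_le_mul_of_nonneg_left hb hδ.le
  refine ⟨ε, ⟨hε0, (div_lt_one hα).2 hbα⟩, ?_⟩
  refine lt_of_lt_of_le ?_ (integral_le_expUtil_mix hmono hconc hV hV0 hW₀0 hα hW₀ hf hε0
    ((div_lt_one hα).2 hbα).le)
  rw [hE, erealIntegral_eq_integral hf, hεα, EReal.coe_lt_coe_iff]
  linarith [hgain, hε0]

end mix

theorem optimizer_pos_of_expected_utility_max_general
    {Ω : Type*} [MeasurableSpace Ω] (P : Measure Ω) [IsProbabilityMeasure P]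
    (U U' : ℝ → ℝ) (U₀ : EReal)
    (hderiv : ∀ x ∈ Set.Ioi (0 : ℝ), HasDerivAt U (U' x) x)
    (hmono : StrictMonoOn U (Set.Ioi 0))
    (hconc : StrictConcaveOn ℝ (Set.Ioi 0) U)
    (hInada₀ : Tendsto U' (nhdsWithin 0 (Set.Ioi 0)) atTop)
    (hU₀ : Tendsto (fun x : ℝ => (U x : EReal)) (nhdsWithin 0 (Set.Ioi 0)) (nhds U₀))
    (hU₀ne : U₀ ≠ ⊤)
    (D : Set (Ω → ℝ)) (hD : Convex ℝ D)
    (hDmeas : ∀ W ∈ D, Measurable W) (hDnonneg : ∀ W ∈ D, ∀ ω, 0 ≤ W ω)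
    (α : ℝ) (hα : 0 < α) (W₀ : Ω → ℝ) (hW₀D : W₀ ∈ D) (hW₀ : ∀ᵐ ω ∂P, α ≤ W₀ ω)
    (Vstar : Ω → ℝ) (hVD : Vstar ∈ D)
    (hopt : expUtil P U U₀ Vstar = ⨆ W ∈ D, expUtil P U U₀ W)
    (hfin : expUtil P U U₀ Vstar ≠ ⊤) :
    ∀ᵐ ω ∂P, 0 < Vstar ω := by
  have hV0 := hDnonneg Vstar hVD
  have hle : ∀ W ∈ D, expUtil P U U₀ W ≤ expUtil P U U₀ Vstar := fun W hW =>
    hopt ▸ le_iSup₂ (f := fun W (_ : W ∈ D) => expUtil P U U₀ W) W hW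
  by_contra hpos
  have hA : P {ω | Vstar ω = 0} ≠ 0 := fun h => hpos <|
    (measure_eq_zero_iff_ae_notMem.1 h).mono fun ω hω => (hV0 ω).lt_of_ne' hω
  have hW₀bot : expUtil P U U₀ W₀ ≠ ⊥ := expUtil_ne_bot_of_ae_le_utilAt (U α) <|
    hW₀.mono fun ω hω => coe_le_utilAt_of_le hmono.monotoneOn hα hω
  have hVbot : expUtil P U U₀ Vstar ≠ ⊥ := ne_bot_of_le_ne_bot hW₀bot (hle W₀ hW₀D)
  obtain ⟨u₀, rfl⟩ : ∃ u₀ : ℝ, U₀ = u₀ := ⟨U₀.toReal, (EReal.coe_toReal hU₀ne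
    fun h => hVbot (by subst h; exact expUtil_bot_eq_bot (hDmeas Vstar hVD) hA)).symm⟩
  obtain ⟨ε, ⟨hε0, hε1⟩, hlt⟩ := exists_expUtil_lt_expUtil_mix hderiv hmono.monotoneOn
    hconc.concaveOn hInada₀ (EReal.tendsto_coe.1 hU₀) (hDmeas Vstar hVD) hV0
    (hDnonneg W₀ hW₀D) hα hW₀ hA hfin hVbot
  exact hlt.not_ge (hle _ (hD hVD hW₀D (sub_nonneg.2 hε1.le) hε0.le (sub_add_cancel 1 ε)))

/-- Let `U : (0,∞) → ℝ` be continuously differentiable, strictly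
increasing and strictly concave, with `U'(0+) = +∞`, `U'(∞) = 0` and
`limsup_{x→∞} x U'(x)/U(x) < 1`; extend `U` to `0` by `U(0) = lim_{x↓0} U(x) ∈ [−∞, ∞)`.
Let `D` be a convex set of nonnegative random variables with well-defined expected
utilities, and suppose there exist `α > 0` and `W₀ ∈ D` with `W₀ ≥ α` a.s. If `V* ∈ D`
satisfies `E[U(V*)] = sup_{W ∈ D} E[U(W)] < ∞`, then `V* > 0` almost surely. -/
theorem optimizer_pos_of_expected_utility_max
    {Ω : Type*} [MeasurableSpace Ω] (P : Measure Ω) [IsProbabilityMeasure P]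
    (U U' : ℝ → ℝ) (U₀ : EReal)
    (hderiv : ∀ x ∈ Set.Ioi (0 : ℝ), HasDerivAt U (U' x) x)
    (hU'cont : ContinuousOn U' (Set.Ioi 0))
    (hmono : StrictMonoOn U (Set.Ioi 0))
    (hconc : StrictConcaveOn ℝ (Set.Ioi 0) U)
    (hInada₀ : Tendsto U' (nhdsWithin 0 (Set.Ioi 0)) atTop)
    (hInadaTop : Tendsto U' atTop (nhds 0))
    (hRAE : Filter.limsup (fun x : ℝ => x * U' x / U x) atTop < 1)
    (hU₀ : Tendsto (fun x : ℝ => (U x : EReal)) (nhdsWithin 0 (Set.Ioi 0)) (nhds U₀))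
    (hU₀ne : U₀ ≠ ⊤)
    (D : Set (Ω → ℝ)) (hD : Convex ℝ D)
    (hDmeas : ∀ W ∈ D, Measurable W) (hDnonneg : ∀ W ∈ D, ∀ ω, 0 ≤ W ω)
    (hDwd : ∀ W ∈ D, ExpUtilWellDef P U U₀ W)
    (α : ℝ) (hα : 0 < α) (W₀ : Ω → ℝ) (hW₀D : W₀ ∈ D) (hW₀ : ∀ᵐ ω ∂P, α ≤ W₀ ω)
    (Vstar : Ω → ℝ) (hVD : Vstar ∈ D)
    (hopt : expUtil P U U₀ Vstar = ⨆ W ∈ D, expUtil P U U₀ W)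
    (hfin : expUtil P U U₀ Vstar ≠ ⊤) :
    ∀ᵐ ω ∂P, 0 < Vstar ω :=
  optimizer_pos_of_expected_utility_max_general P U U' U₀ hderiv hmono hconc hInada₀ hU₀ hU₀ne D hD
    hDmeas hDnonneg α hα W₀ hW₀D hW₀ Vstar hVD hopt hfin
end

section
/- Let (Ω, ℱ, P) be a probability space, let C be a convex set of random variables that are strictly positive almost surely, and let V* ∈ C be such that E[log V*] is finite and, for every W ∈ C, E[log W] is well-defined in [−∞, ∞) and satisfies E[log W] ≤ E[log V*] (V* is log-optimal for C). Then E[W / V*] ≤ 1 for every W ∈ C; that is, V* is a numéraire portfolio for C. -/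
/-!
Perturb `V*` towards `W ∈ C` along `V_ε = (1 - ε) V* + ε W ∈ C`. Log-optimality gives
`E[(log V_ε - log V*) / ε] ≤ 0`; the integrand is bounded below by `log (1 - ε) / ε ≥ -2`
for `ε ≤ 1/2` and tends to `W / V* - 1` as `ε → 0+`, so Fatou's lemma yields
`E[W / V* - 1] ≤ 0`.
-/

open MeasureTheory Set Filter ENNReal

/-- The expectation `E[log f] ∈ [−∞, +∞]` of the logarithm of a random variable,
defined as the difference of the integrals of its positive and negative parts. -/
noncomputable def elogExp {Ω : Type*} [MeasurableSpace Ω] (P : Measure Ω)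
    (f : Ω → ℝ) : EReal :=
  ((∫⁻ ω, ENNReal.ofReal (max (Real.log (f ω)) 0) ∂P : ℝ≥0∞) : EReal)
    - ((∫⁻ ω, ENNReal.ofReal (max (-(Real.log (f ω))) 0) ∂P : ℝ≥0∞) : EReal)

open Topology

noncomputable def logSlope (v w ε : ℝ) : ℝ :=
  (Real.log ((1 - ε) * v + ε * w) - Real.log v) / ε

lemma neg_two_mul_le_log_one_sub {ε : ℝ} (hε₀ : 0 ≤ ε) (hε : ε ≤ 1 / 2) :
    -(2 * ε) ≤ Real.log (1 - ε) := by
  have h := Real.one_sub_inv_le_log_of_pos (x := 1 - ε) (by linarith)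
  have hinv : (1 - ε)⁻¹ ≤ 1 + 2 * ε := by
    rw [inv_le_iff_one_le_mul₀ (by linarith)]
    nlinarith
  linarith

lemma log_add_log_one_sub_le_log_convex_comb {v w ε : ℝ} (hv : 0 < v) (hw : 0 ≤ w)
    (hε₀ : 0 ≤ ε) (hε : ε < 1) :
    Real.log v + Real.log (1 - ε) ≤ Real.log ((1 - ε) * v + ε * w) := by
  rw [← Real.log_mul hv.ne' (by linarith)]
  exact Real.log_le_log (by nlinarith) (by nlinarith)

lemma neg_two_le_logSlope {v w ε : ℝ} (hv : 0 < v) (hw : 0 ≤ w) (hε₀ : 0 < ε)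
    (hε : ε ≤ 1 / 2) : -2 ≤ logSlope v w ε := by
  rw [logSlope, le_div_iff₀ hε₀]
  linarith [log_add_log_one_sub_le_log_convex_comb hv hw hε₀.le (by linarith : ε < 1),
    neg_two_mul_le_log_one_sub hε₀.le hε]

/-- The derivative of `t ↦ log ((1 - t) v + t w)` at `0` is `(w - v) / v`. -/
lemma tendsto_logSlope {v : ℝ} (hv : 0 < v) (w : ℝ) :
    Tendsto (logSlope v w) (𝓝[≠] 0) (𝓝 (w / v - 1)) := by
  have hlin : HasDerivAt (fun t => (1 - t) * v + t * w) (w - v) 0 := by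
    rw [show (fun t : ℝ => (1 - t) * v + t * w) = fun t => v + t * (w - v) by ext; ring]
    exact (hasDerivAt_mul_const (w - v)).const_add v
  have hslope := hasDerivAt_iff_tendsto_slope.1 (hlin.log (by simpa using hv.ne'))
  convert hslope using 2
  · ext ε
    simp [logSlope, slope_def_field]
  · simp [sub_div, hv.ne']

section Integrals

variable {Ω : Type*} [MeasurableSpace Ω] {μ : Measure Ω}

lemma integrable_of_lintegral_ofReal_ne_top {g : Ω → ℝ} (hg : AEMeasurable g μ)
    (hpos : ∫⁻ ω, .ofReal (g ω) ∂μ ≠ ∞) (hneg : ∫⁻ ω, .ofReal (-g ω) ∂μ ≠ ∞) :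
    Integrable g μ := by
  have h := (integrable_toReal_of_lintegral_ne_top hg.ennreal_ofReal hpos).sub
    (integrable_toReal_of_lintegral_ne_top hg.neg.ennreal_ofReal hneg)
  refine h.congr (ae_of_all _ fun ω => ?_)
  simp [toReal_ofReal']

lemma lintegral_ofReal_neg_ne_top_of_le {g k : Ω → ℝ} (hk : Integrable k μ) (hkg : k ≤ᵐ[μ] g) :
    ∫⁻ ω, .ofReal (-g ω) ∂μ ≠ ∞ :=
  ne_top_of_le_ne_top hk.neg.lintegral_lt_top.ne
    (lintegral_mono_ae (hkg.mono fun _ h => ofReal_le_ofReal (neg_le_neg h)))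

/-- Fatou's lemma for real functions bounded below by a common constant. -/
lemma lintegral_ofReal_add_le_of_tendsto [IsProbabilityMeasure μ] {ι : Type*} {l : Filter ι}
    [l.IsCountablyGenerated] [l.NeBot] {f : ι → Ω → ℝ} {g : Ω → ℝ} {c : ℝ}
    (hf : ∀ i, AEMeasurable (f i) μ) (hf_int : ∀ᶠ i in l, Integrable (f i) μ)
    (hf_nonpos : ∀ᶠ i in l, ∫ ω, f i ω ∂μ ≤ 0) (hf_ge : ∀ᶠ i in l, ∀ᵐ ω ∂μ, -c ≤ f i ω)
    (hlim : ∀ᵐ ω ∂μ, Tendsto (fun i => f i ω) l (𝓝 (g ω))) :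
    ∫⁻ ω, .ofReal (g ω + c) ∂μ ≤ .ofReal c := by
  have hbound : ∀ᶠ i in l, ∫⁻ ω, .ofReal (f i ω + c) ∂μ ≤ .ofReal c := by
    filter_upwards [hf_int, hf_nonpos, hf_ge] with i hint hle hge
    have hint_c : Integrable (fun ω => f i ω + c) μ := hint.add (integrable_const c)
    have hnonneg : 0 ≤ᵐ[μ] fun ω => f i ω + c := hge.mono fun _ h => by
      simp only [Pi.zero_apply]; linarith
    rw [← ofReal_integral_eq_lintegral_ofReal hint_c hnonneg,
      integral_add hint (integrable_const c), integral_const, probReal_univ, one_smul]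
    exact ofReal_le_ofReal (by linarith)
  calc ∫⁻ ω, .ofReal (g ω + c) ∂μ
      = ∫⁻ ω, liminf (fun i => ENNReal.ofReal (f i ω + c)) l ∂μ :=
        lintegral_congr_ae <| hlim.mono fun _ h =>
          (((continuous_ofReal.tendsto _).comp (h.add_const c)).liminf_eq).symm
    _ ≤ liminf (fun i => ∫⁻ ω, .ofReal (f i ω + c) ∂μ) l :=
        lintegral_liminf_le' fun i => ((hf i).add_const c).ennreal_ofReal
    _ ≤ .ofReal c := liminf_le_of_frequently_le' hbound.frequently

end Integrals

section ExpectedLog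

variable {Ω : Type*} [MeasurableSpace Ω] {μ : Measure Ω}

lemma elogExp_eq_integral {f : Ω → ℝ} (hf : Integrable (fun ω => Real.log (f ω)) μ) :
    elogExp μ f = ((∫ ω, Real.log (f ω) ∂μ : ℝ) : EReal) := by
  have hpos := hf.lintegral_lt_top.ne
  have hneg : ∫⁻ ω, .ofReal (-Real.log (f ω)) ∂μ ≠ ∞ := hf.neg.lintegral_lt_top.ne
  rw [integral_eq_lintegral_pos_part_sub_lintegral_neg_part hf, elogExp, EReal.coe_sub]
  simp only [ofReal_max, ofReal_zero, max_zero]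
  rw [EReal.coe_ennreal_toReal hpos, EReal.coe_ennreal_toReal hneg]

lemma integral_log_le_of_elogExp_le {f g : Ω → ℝ} (hf : Integrable (fun ω => Real.log (f ω)) μ)
    (hg : Integrable (fun ω => Real.log (g ω)) μ) (hfg : elogExp μ f ≤ elogExp μ g) :
    ∫ ω, Real.log (f ω) ∂μ ≤ ∫ ω, Real.log (g ω) ∂μ := by
  rwa [elogExp_eq_integral hf, elogExp_eq_integral hg, EReal.coe_le_coe_iff] at hfg

lemma integrable_log_of_elogExp_ne_top {f k : Ω → ℝ} (hf : AEMeasurable f μ)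
    (htop : elogExp μ f ≠ ⊤) (hk : Integrable k μ) (hkf : k ≤ᵐ[μ] fun ω => Real.log (f ω)) :
    Integrable (fun ω => Real.log (f ω)) μ := by
  have hneg := lintegral_ofReal_neg_ne_top_of_le hk hkf
  refine integrable_of_lintegral_ofReal_ne_top hf.log (fun hpos => htop ?_) hneg
  simp only [elogExp, ofReal_max, ofReal_zero, max_zero, hpos, EReal.coe_ennreal_top]
  exact EReal.top_sub (by simpa using hneg)

/-- The lower bound `log V_ε ≥ log V + log (1 - ε)` controls the negative part of `log V_ε`,
and `E[log V_ε] ≤ E[log V] < ∞` its positive part. -/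
lemma integrable_log_convex_comb [IsFiniteMeasure μ] {V W : Ω → ℝ} {ε : ℝ}
    (hV : Integrable (fun ω => Real.log (V ω)) μ) (hVpos : ∀ᵐ ω ∂μ, 0 < V ω)
    (hWpos : ∀ᵐ ω ∂μ, 0 < W ω) (hm : AEMeasurable (fun ω => (1 - ε) * V ω + ε * W ω) μ)
    (hε₀ : 0 ≤ ε) (hε : ε < 1)
    (hopt : elogExp μ (fun ω => (1 - ε) * V ω + ε * W ω) ≤ elogExp μ V) :
    Integrable (fun ω => Real.log ((1 - ε) * V ω + ε * W ω)) μ := by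
  refine integrable_log_of_elogExp_ne_top hm
    (hopt.trans_lt (elogExp_eq_integral hV ▸ EReal.coe_lt_top _)).ne
    (hV.add (integrable_const (Real.log (1 - ε)))) ?_
  filter_upwards [hVpos, hWpos] with ω hv hw
  exact log_add_log_one_sub_le_log_convex_comb hv hw.le hε₀ hε

lemma integral_logSlope_nonpos {V W : Ω → ℝ} {ε : ℝ}
    (hVε : Integrable (fun ω => Real.log ((1 - ε) * V ω + ε * W ω)) μ)
    (hV : Integrable (fun ω => Real.log (V ω)) μ) (hε₀ : 0 ≤ ε)
    (hopt : elogExp μ (fun ω => (1 - ε) * V ω + ε * W ω) ≤ elogExp μ V) :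
    ∫ ω, logSlope (V ω) (W ω) ε ∂μ ≤ 0 := by
  simp only [logSlope]
  rw [integral_div, integral_sub hVε hV]
  exact div_nonpos_of_nonpos_of_nonneg
    (sub_nonpos.2 (integral_log_le_of_elogExp_le hVε hV hopt)) hε₀

end ExpectedLog

theorem log_optimal_is_numeraire_general
    {Ω : Type*} [MeasurableSpace Ω] (P : Measure Ω) [IsProbabilityMeasure P]
    (C : Set (Ω → ℝ)) (hC : Convex ℝ C)
    (hCmeas : ∀ W ∈ C, Measurable W) (hCpos : ∀ W ∈ C, ∀ᵐ ω ∂P, 0 < W ω)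
    (Vstar : Ω → ℝ) (hV : Vstar ∈ C)
    (hfin_pos : (∫⁻ ω, ENNReal.ofReal (max (Real.log (Vstar ω)) 0) ∂P) ≠ ⊤)
    (hfin_neg : (∫⁻ ω, ENNReal.ofReal (max (-(Real.log (Vstar ω))) 0) ∂P) ≠ ⊤)
    (hopt : ∀ W ∈ C, elogExp P W ≤ elogExp P Vstar) :
    ∀ W ∈ C, ∫⁻ ω, ENNReal.ofReal (W ω / Vstar ω) ∂P ≤ 1 := by
  intro W hW
  have hVm := hCmeas _ hV
  have hWm := hCmeas _ hW
  have hlogV : Integrable (fun ω => Real.log (Vstar ω)) P :=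
    integrable_of_lintegral_ofReal_ne_top hVm.aemeasurable.log (by simpa using hfin_pos)
      (by simpa using hfin_neg)
  have hsmall : ∀ᶠ ε in 𝓝[>] (0 : ℝ), ε ∈ Ioc (0 : ℝ) (1 / 2) := Ioc_mem_nhdsGT (by norm_num)
  have hVεC : ∀ ε ∈ Ioc (0 : ℝ) (1 / 2), (fun ω => (1 - ε) * Vstar ω + ε * W ω) ∈ C :=
    fun ε hε => hC hV hW (by linarith [hε.2]) hε.1.le (by ring)
  have hlogVε : ∀ ε ∈ Ioc (0 : ℝ) (1 / 2),
      Integrable (fun ω => Real.log ((1 - ε) * Vstar ω + ε * W ω)) P := fun ε hε =>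
    integrable_log_convex_comb hlogV (hCpos _ hV) (hCpos _ hW) (hCmeas _ (hVεC ε hε)).aemeasurable
      hε.1.le (by linarith [hε.2]) (hopt _ (hVεC ε hε))
  have hint : ∀ᶠ ε in 𝓝[>] 0, Integrable (fun ω => logSlope (Vstar ω) (W ω) ε) P :=
    hsmall.mono fun ε hε => ((hlogVε ε hε).sub hlogV).div_const ε
  have hnonpos : ∀ᶠ ε in 𝓝[>] 0, ∫ ω, logSlope (Vstar ω) (W ω) ε ∂P ≤ 0 :=
    hsmall.mono fun ε hε => integral_logSlope_nonpos (hlogVε ε hε) hlogV hε.1.le (hopt _ (hVεC ε hε))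
  have hge : ∀ᶠ ε in 𝓝[>] 0, ∀ᵐ ω ∂P, -2 ≤ logSlope (Vstar ω) (W ω) ε := by
    filter_upwards [hsmall] with ε hε
    filter_upwards [hCpos _ hV, hCpos _ hW] with ω hv hw
    exact neg_two_le_logSlope hv hw.le hε.1 hε.2
  have hlim : ∀ᵐ ω ∂P, Tendsto (logSlope (Vstar ω) (W ω)) (𝓝[>] 0) (𝓝 (W ω / Vstar ω - 1)) := by
    filter_upwards [hCpos _ hV] with ω hv
    exact (tendsto_logSlope hv (W ω)).mono_left (nhdsWithin_mono _ fun _ h => ne_of_gt h)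
  have hfatou := lintegral_ofReal_add_le_of_tendsto (fun ε => by unfold logSlope; fun_prop)
    hint hnonpos hge hlim
  have hshift : ∀ᵐ ω ∂P,
      ENNReal.ofReal (W ω / Vstar ω - 1 + 2) = .ofReal (W ω / Vstar ω) + 1 := by
    filter_upwards [hCpos _ hV, hCpos _ hW] with ω hv hw
    rw [← ofReal_one, ← ofReal_add (div_pos hw hv).le zero_le_one]
    ring_nf
  rw [lintegral_congr_ae hshift, lintegral_add_right _ measurable_const, lintegral_const,
    measure_univ, mul_one, ofReal_ofNat, ← one_add_one_eq_two] at hfatou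
  exact (ENNReal.add_le_add_iff_right one_ne_top).1 hfatou

/-- Let `C` be a convex set of a.s. strictly positive random variables
and `V* ∈ C` be such that `E[log V*]` is finite and, for every `W ∈ C`, `E[log W]` is
well-defined in `[−∞, ∞)` and satisfies `E[log W] ≤ E[log V*]` (`V*` is log-optimal for
`C`). Then `E[W / V*] ≤ 1` for every `W ∈ C`; that is, `V*` is a numéraire portfolio
for `C`. -/
theorem log_optimal_is_numeraire
    {Ω : Type*} [MeasurableSpace Ω] (P : Measure Ω) [IsProbabilityMeasure P]
    (C : Set (Ω → ℝ)) (hC : Convex ℝ C)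
    (hCmeas : ∀ W ∈ C, Measurable W) (hCpos : ∀ W ∈ C, ∀ᵐ ω ∂P, 0 < W ω)
    (Vstar : Ω → ℝ) (hV : Vstar ∈ C)
    (hfin_pos : (∫⁻ ω, ENNReal.ofReal (max (Real.log (Vstar ω)) 0) ∂P) ≠ ⊤)
    (hfin_neg : (∫⁻ ω, ENNReal.ofReal (max (-(Real.log (Vstar ω))) 0) ∂P) ≠ ⊤)
    (hwd : ∀ W ∈ C, (∫⁻ ω, ENNReal.ofReal (max (Real.log (W ω)) 0) ∂P) ≠ ⊤)
    (hopt : ∀ W ∈ C, elogExp P W ≤ elogExp P Vstar) :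
    ∀ W ∈ C, ∫⁻ ω, ENNReal.ofReal (W ω / Vstar ω) ∂P ≤ 1 :=
  log_optimal_is_numeraire_general P C hC hCmeas hCpos Vstar hV hfin_pos hfin_neg hopt
end
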